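/- Λ(Y|X) = 0 if and only if Y is stochastically comparable relative to X, that is, if and only if Ψ(κ(x₁), κ(x₂)) = 1/2 for (μ_X ⊗ μ_X)-almost all (x₁, x₂) with x₁ ≠ x₂. -/

import Mathlib

open MeasureTheory ProbabilityTheory Set Filter Topology

/-- The (nonparametric) relative effect `Ψ(μ, ν) = ∫ μ((-∞,y)) + (1/2) μ({y}) dν(y)`. -/
noncomputable def relEffect (μ ν : Measure ℝ) : ℝ :=
  ∫ y, ((μ (Set.Iio y)).toReal + (1 / 2) * (μ {y}).toReal) ∂ν

/-- `α(μ) = 1 - ∫ μ({x}) dμ(x) = 1 - P(X = X*)`, the non-discrete mass of `μ`. -/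
noncomputable def alphaCoeff {E : Type*} [MeasurableSpace E] (μ : Measure E) : ℝ :=
  1 - ∫ x, (μ {x}).toReal ∂μ

/-- The coefficient of separation `Λ(Y|X)`. -/
noncomputable def sepCoeff {Ω E : Type*} [MeasurableSpace Ω] [MeasurableSpace E]
    (P : Measure Ω) [IsFiniteMeasure P] (Y : Ω → ℝ) (X : Ω → E) : ℝ :=
  (alphaCoeff (P.map X))⁻¹ *
    ∫ x : E × E,
      (relEffect (condDistrib Y X P x.1) (condDistrib Y X P x.2)
        - relEffect (condDistrib Y X P x.2) (condDistrib Y X P x.1)) ^ 2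
      ∂((P.map X).prod (P.map X))

/-- A random variable is non-degenerate if it is not a.s. constant. -/
def Nondegenerate {Ω α : Type*} [MeasurableSpace Ω] (P : Measure Ω) (Z : Ω → α) : Prop :=
  ¬ ∃ c, ∀ᵐ ω ∂P, Z ω = c

/-- `Y` is stochastically comparable relative to `X`. -/
def StochasticallyComparable {Ω E : Type*} [MeasurableSpace Ω] [MeasurableSpace E]
    (P : Measure Ω) [IsFiniteMeasure P] (Y : Ω → ℝ) (X : Ω → E) : Prop :=
  ∀ᵐ x : E × E ∂((P.map X).prod (P.map X)), x.1 ≠ x.2 →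
    relEffect (condDistrib Y X P x.1) (condDistrib Y X P x.2) = 1 / 2

/-!
Writing `Ψ(μ, ν) = P(Z < Y) + ½ P(Z = Y)` for independent `Z ∼ μ`, `Y ∼ ν` shows
`Ψ(μ, ν) + Ψ(ν, μ) = 1`, so the integrand of `Λ` is `(2 Ψ(κ(x₁), κ(x₂)) - 1)²`. It is bounded,
nonnegative and vanishes on the diagonal, hence its integral is zero exactly when `Y` is
stochastically comparable. It remains to see that the factor `α(X)⁻¹` is not the junk value
`0⁻¹ = 0`: `α(X) = 0` forces `μ_X({x}) = 1` for some `x`, i.e. `X` almost surely constant,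
which a nondegenerate coordinate rules out.
-/

theorem MeasureTheory.Measure.integral_measureReal_prodMk_left {α β : Type*}
    [MeasurableSpace α] [MeasurableSpace β]
    (μ : Measure α) (ν : Measure β) [SFinite ν] {s : Set (α × β)} (hs : MeasurableSet s)
    (h2s : (μ.prod ν) s ≠ ⊤) :
    ∫ x, ν.real (Prod.mk x ⁻¹' s) ∂μ = (μ.prod ν).real s := by
  simp_rw [measureReal_def]
  rw [integral_toReal (measurable_measure_prodMk_left hs).aemeasurable
    (Measure.ae_measure_lt_top hs h2s), Measure.prod_apply hs]

theorem relEffect_eq_measureReal_prod (μ ν : Measure ℝ) [IsFiniteMeasure μ] [IsFiniteMeasure ν] :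
    relEffect μ ν =
      (ν.prod μ).real {p | p.2 < p.1} + 1 / 2 * (ν.prod μ).real {p | p.2 = p.1} := by
  have hlt : MeasurableSet {p : ℝ × ℝ | p.2 < p.1} := measurableSet_lt measurable_snd measurable_fst
  have heq : MeasurableSet {p : ℝ × ℝ | p.2 = p.1} :=
    measurableSet_eq_fun measurable_snd measurable_fst
  rw [← Measure.integral_measureReal_prodMk_left ν μ hlt (measure_ne_top _ _),
    ← Measure.integral_measureReal_prodMk_left ν μ heq (measure_ne_top _ _), ← integral_const_mul,
    ← integral_add (Measure.integrable_measure_prodMk_left hlt (measure_ne_top _ _))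
      ((Measure.integrable_measure_prodMk_left heq (measure_ne_top _ _)).const_mul _)]
  rfl

theorem relEffect_nonneg (μ ν : Measure ℝ) : 0 ≤ relEffect μ ν :=
  integral_nonneg fun _ ↦ by positivity

theorem relEffect_add_relEffect_swap (μ ν : Measure ℝ) [IsProbabilityMeasure μ]
    [IsProbabilityMeasure ν] : relEffect μ ν + relEffect ν μ = 1 := by
  have hlt : MeasurableSet {p : ℝ × ℝ | p.2 < p.1} := measurableSet_lt measurable_snd measurable_fst
  have hle : MeasurableSet {p : ℝ × ℝ | p.2 ≤ p.1} := measurableSet_le measurable_snd measurable_fst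
  have heq : MeasurableSet {p : ℝ × ℝ | p.2 = p.1} :=
    measurableSet_eq_fun measurable_snd measurable_fst
  have hswap (s : Set (ℝ × ℝ)) (hs : MeasurableSet s) :
      (μ.prod ν).real s = (ν.prod μ).real (Prod.swap ⁻¹' s) := by
    rw [← Measure.prod_swap, map_measureReal_apply measurable_swap hs]
  have hsplit : (ν.prod μ).real {p | p.2 < p.1} + (ν.prod μ).real {p | p.2 = p.1}
      = (ν.prod μ).real {p | p.2 ≤ p.1} := by
    rw [← measureReal_union _ heq]
    · congr 1; ext p; exact (le_iff_lt_or_eq (a := p.2) (b := p.1)).symm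
    · exact Set.disjoint_left.2 fun (p : ℝ × ℝ) (h : p.2 < p.1) (h' : p.2 = p.1) ↦ h.ne h'
  have hcompl := probReal_add_probReal_compl (μ := ν.prod μ) hle
  rw [relEffect_eq_measureReal_prod, relEffect_eq_measureReal_prod, hswap _ hlt, hswap _ heq]
  have e1 : Prod.swap ⁻¹' {p : ℝ × ℝ | p.2 < p.1} = {p | p.2 ≤ p.1}ᶜ := by ext p; simp
  have e2 : Prod.swap ⁻¹' {p : ℝ × ℝ | p.2 = p.1} = {p | p.2 = p.1} := by ext p; simp [eq_comm]
  rw [e1, e2]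
  linarith

theorem relEffect_le_one (μ ν : Measure ℝ) [IsProbabilityMeasure μ] [IsProbabilityMeasure ν] :
    relEffect μ ν ≤ 1 := by
  linarith [relEffect_add_relEffect_swap μ ν, relEffect_nonneg ν μ]

theorem relEffect_sub_relEffect_swap_eq_zero_iff (μ ν : Measure ℝ) [IsProbabilityMeasure μ]
    [IsProbabilityMeasure ν] : relEffect μ ν - relEffect ν μ = 0 ↔ relEffect μ ν = 1 / 2 := by
  have := relEffect_add_relEffect_swap μ ν
  constructor <;> intro <;> linarith

theorem ProbabilityTheory.Kernel.measurable_relEffect {α : Type*} [MeasurableSpace α]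
    (κ η : Kernel α ℝ) [IsFiniteKernel κ] [IsFiniteKernel η] :
    Measurable fun a ↦ relEffect (κ a) (η a) := by
  simp_rw [relEffect_eq_measureReal_prod, ← Kernel.prod_apply η κ]
  have hlt := (η ×ₖ κ).measurable_coe (measurableSet_lt measurable_snd measurable_fst)
  have heq := (η ×ₖ κ).measurable_coe (measurableSet_eq_fun measurable_snd measurable_fst)
  exact hlt.ennreal_toReal.add (heq.ennreal_toReal.const_mul _)

theorem integral_sq_relEffect_sub_swap_eq_zero_iff {E : Type*} [MeasurableSpace E]
    (κ : Kernel E ℝ) [IsMarkovKernel κ] (μ : Measure (E × E)) [IsFiniteMeasure μ] :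
    ∫ x, (relEffect (κ x.1) (κ x.2) - relEffect (κ x.2) (κ x.1)) ^ 2 ∂μ = 0 ↔
      ∀ᵐ x ∂μ, x.1 ≠ x.2 → relEffect (κ x.1) (κ x.2) = 1 / 2 := by
  have hmeas :
      Measurable fun x : E × E ↦ relEffect (κ x.1) (κ x.2) - relEffect (κ x.2) (κ x.1) :=
    ((κ.comap Prod.fst measurable_fst).measurable_relEffect (κ.comap Prod.snd measurable_snd)).sub
      ((κ.comap Prod.snd measurable_snd).measurable_relEffect (κ.comap Prod.fst measurable_fst))
  have hint : Integrable
      (fun x : E × E ↦ (relEffect (κ x.1) (κ x.2) - relEffect (κ x.2) (κ x.1)) ^ 2) μ := by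
    refine .of_bound (hmeas.pow_const 2).aestronglyMeasurable 1 (ae_of_all _ fun x ↦ ?_)
    have h₁ := relEffect_le_one (κ x.1) (κ x.2)
    have h₂ := relEffect_le_one (κ x.2) (κ x.1)
    have h₃ := relEffect_nonneg (κ x.1) (κ x.2)
    have h₄ := relEffect_nonneg (κ x.2) (κ x.1)
    rw [Real.norm_eq_abs, abs_of_nonneg (sq_nonneg _)]
    nlinarith
  rw [integral_eq_zero_iff_of_nonneg (fun _ ↦ sq_nonneg _) hint]
  refine Filter.eventually_congr (ae_of_all _ fun x ↦ ?_)
  rw [Pi.zero_apply, sq_eq_zero_iff]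
  rcases eq_or_ne x.1 x.2 with hx | hx
  · simp [hx]
  · simpa [hx] using relEffect_sub_relEffect_swap_eq_zero_iff (κ x.1) (κ x.2)

theorem alphaCoeff_ne_zero {E : Type*} [MeasurableSpace E] [MeasurableEq E] (μ : Measure E)
    [IsProbabilityMeasure μ] (h : ∀ x, μ {x} ≠ 1) : alphaCoeff μ ≠ 0 := by
  have hmeas : Measurable fun x ↦ μ.real {x} :=
    (measurable_measure_prodMk_left
      (measurableSet_eq_fun measurable_snd measurable_fst)).ennreal_toReal
  have hint : Integrable (fun x ↦ μ.real {x}) μ :=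
    .of_bound hmeas.aestronglyMeasurable 1
      (ae_of_all _ fun _ ↦ (Real.norm_of_nonneg measureReal_nonneg).trans_le measureReal_le_one)
  intro hα
  have hzero : ∫ x, (1 - μ.real {x}) ∂μ = 0 := by
    rw [integral_sub (integrable_const 1) hint, integral_const, probReal_univ, one_smul]
    exact hα
  obtain ⟨x, hx⟩ := ((integral_eq_zero_iff_of_nonneg (fun x ↦ sub_nonneg.2 measureReal_le_one)
    ((integrable_const 1).sub hint)).1 hzero).exists
  rw [Pi.zero_apply, sub_eq_zero, eq_comm, measureReal_def, ENNReal.toReal_eq_one_iff] at hx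
  exact h x hx

theorem Nondegenerate.of_comp {Ω α β : Type*} [MeasurableSpace Ω] {P : Measure Ω} {X : Ω → α}
    {g : α → β} (h : Nondegenerate P fun ω ↦ g (X ω)) : Nondegenerate P X :=
  fun ⟨c, hc⟩ ↦ h ⟨g c, hc.mono fun _ ↦ congrArg g⟩

theorem Nondegenerate.measure_map_singleton_ne_one {Ω E : Type*} [MeasurableSpace Ω]
    [MeasurableSpace E] [MeasurableSingletonClass E] {P : Measure Ω} [IsProbabilityMeasure P]
    {X : Ω → E} (hX : Measurable X) (h : Nondegenerate P X) (x : E) : P.map X {x} ≠ 1 := by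
  intro hx
  rw [Measure.map_apply hX (measurableSet_singleton x)] at hx
  exact h ⟨x, ae_iff.2 ((prob_compl_eq_zero_iff (hX (measurableSet_singleton x))).2 hx)⟩

theorem sepCoeff_eq_zero_iff_stochasticallyComparable_general
    {Ω : Type*} [MeasurableSpace Ω] {p : ℕ}
    (P : Measure Ω) [IsProbabilityMeasure P]
    (X : Ω → (Fin p → ℝ)) (Y : Ω → ℝ)
    (hX : Measurable X)
    (hXnd : ∃ k, Nondegenerate P fun ω => X ω k) :
    sepCoeff P Y X = 0 ↔ StochasticallyComparable P Y X := by
  obtain ⟨k, hk⟩ := hXnd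
  have := Measure.isProbabilityMeasure_map (μ := P) hX.aemeasurable
  have hα : alphaCoeff (P.map X) ≠ 0 :=
    alphaCoeff_ne_zero _ ((hk.of_comp (g := fun x ↦ x k)).measure_map_singleton_ne_one hX)
  rw [sepCoeff, mul_eq_zero, inv_eq_zero, or_iff_right hα]
  exact integral_sq_relEffect_sub_swap_eq_zero_iff _ _

/-- `Λ(Y|X) = 0` iff `Y` is stochastically comparable relative to `X`. -/
theorem sepCoeff_eq_zero_iff_stochasticallyComparable
    {Ω : Type*} [MeasurableSpace Ω] {p : ℕ} (hp : 1 ≤ p)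
    (P : Measure Ω) [IsProbabilityMeasure P]
    (X : Ω → (Fin p → ℝ)) (Y : Ω → ℝ)
    (hX : Measurable X) (hY : Measurable Y)
    (hXnd : ∃ k, Nondegenerate P fun ω => X ω k)
    (hYnd : Nondegenerate P Y) :
    sepCoeff P Y X = 0 ↔ StochasticallyComparable P Y X :=
  sepCoeff_eq_zero_iff_stochasticallyComparable_general P X Y hX hXnd
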